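/- arXiv:1812.00766 — 3 statements merged into one kernel-verified Lean document; each statement's English description precedes it below -/
import Mathlib

section
/- The functions x_i are well defined on [0,1]: if 𝐭 and 𝐮 are two ternary representations of the same t ∈ [0,1] (i.e., Φ(𝐭) = Φ(𝐮) = t), then x_i(𝐭) = x_i(𝐮) for every i ∈ {1,…,n}. -/
open scoped BigOperators ENNReal

/-- `Φ` : evaluation of a ternary digit sequence (digits at indices `1,2,3,…`). -/
noncomputable def Phi (t : ℕ → ℕ) : ℝ := ∑' k : ℕ, (t (k + 1) : ℝ) / 3 ^ (k + 1)

/-- A sequence of ternary digits (elements of `D = {0,1,2}`). -/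
def IsDigitSeq (t : ℕ → ℕ) : Prop := ∀ k, t k ≤ 2

/-- `S_{i+jn}(𝐭) = ∑_{k=1}^{i+jn} t_k − ∑_{s=0}^{j} t_{i+sn}`. -/
def S (n i j : ℕ) (t : ℕ → ℕ) : ℤ :=
  (∑ k ∈ Finset.Icc 1 (i + j * n), (t k : ℤ)) -
    ∑ s ∈ Finset.range (j + 1), (t (i + s * n) : ℤ)

/-- The operator `ξ(a) = 2 − a`, as a permutation of `ℝ` (so that integer powers
`ξ^m`, `m : ℤ`, make sense). -/
def xiPerm : Equiv.Perm ℝ :=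
  ⟨fun a => 2 - a, fun a => 2 - a, fun a => by dsimp; ring, fun a => by dsimp; ring⟩

/-- `x_i(𝐭) = ∑_{j=0}^∞ ξ^{S_{i+jn}(𝐭)}(t_{i+jn}) / 3^{j+1}`. -/
noncomputable def xcoord (n i : ℕ) (t : ℕ → ℕ) : ℝ :=
  ∑' j : ℕ, ((xiPerm ^ (S n i j t)) ((t (i + j * n) : ℝ))) / 3 ^ (j + 1)

/-- The canonical ternary digit expansion of `t ∈ [0,1]` (all digits `2` for `t = 1`). -/
noncomputable def ternaryDigit (t : ℝ) (k : ℕ) : ℕ :=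
  if t = 1 then 2 else (⌊t * 3 ^ k⌋).toNat % 3

/-- The `i`-th coordinate function of the `n`-dimensional Peano curve, as a function
on `[0,1]` (via the canonical ternary representation; by well-definedness this agrees
with `xcoord` on any ternary representation). -/
noncomputable def peanoCoord (n i : ℕ) (t : ℝ) : ℝ := xcoord n i (ternaryDigit t)

/-!
Two ternary expansions of the same point agree, or agree up to a position `m` where one reads
`d + 1, 0, 0, …` and the other `d, 2, 2, …`. Modulo 2 these digit sequences differ only at `m`,
and `ξ ^ k` depends only on `k mod 2`. If `m` is not of the form `i + jn`, the parity of
`S_{i+jn}` flips exactly when `i + jn > m`, and `ξ` turns the trailing digit `0` into `2`, so the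
two series agree termwise. If `m = i + sn`, the parities agree for every `j` and are constant for
`j ≥ s`, while `ξ ^ k x - ξ ^ k y = ±(x - y)`; the difference of the series is then
`±(Φ(a') - Φ(b'))` for the sampled sequences `a'_{j+1} = a_{i+jn}`, `b'_{j+1} = b_{i+jn}`, which
again form such a pair of expansions, so it vanishes.
-/

section
open Finset

/-- `a` and `b` are the two ternary expansions `0.c₁…c_{m-1}(d+1)000…` and `0.c₁…c_{m-1}d222…`
of one triadic rational. -/
structure IsCarryPair (m : ℕ) (a b : ℕ → ℕ) : Prop where
  one_le : 1 ≤ m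
  eq_of_lt : ∀ k, 1 ≤ k → k < m → a k = b k
  carry : a m = b m + 1
  left_tail : ∀ k, m < k → a k = 0
  right_tail : ∀ k, m < k → b k = 2

variable {m n i : ℕ} {a b t u : ℕ → ℕ}

lemma hasSum_two_div_three_pow (m : ℕ) :
    HasSum (fun k : ℕ => (2 : ℝ) / 3 ^ (k + m + 1)) (1 / 3 ^ m) := by
  have h := (hasSum_geometric_of_lt_one (r := (1 / 3 : ℝ)) (by norm_num) (by norm_num)).mul_left
    (2 / 3 ^ (m + 1))
  have hterm :
      (fun k : ℕ => (2 : ℝ) / 3 ^ (k + m + 1)) = fun k => 2 / 3 ^ (m + 1) * (1 / 3) ^ k := by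
    funext k
    rw [div_pow, one_pow, add_assoc, pow_add]
    field_simp
  have hsum : (1 : ℝ) / 3 ^ m = 2 / 3 ^ (m + 1) * (1 - 1 / 3)⁻¹ := by
    field_simp
    ring
  rwa [hterm, hsum]

lemma IsDigitSeq.summable (ht : IsDigitSeq t) :
    Summable fun k : ℕ => (t (k + 1) : ℝ) / 3 ^ (k + 1) :=
  (hasSum_two_div_three_pow 0).summable.of_nonneg_of_le (fun _ => by positivity) fun k => by
    gcongr
    exact_mod_cast ht _

lemma Phi_le_Phi (ht : IsDigitSeq t) (hu : IsDigitSeq u) (h : ∀ k, 1 ≤ k → t k ≤ u k) :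
    Phi t ≤ Phi u :=
  ht.summable.tsum_le_tsum (fun k => by gcongr; exact h _ k.succ_pos) hu.summable

lemma eq_of_Phi_eq_of_le (ht : IsDigitSeq t) (hu : IsDigitSeq u) (h : ∀ k, 1 ≤ k → t k ≤ u k)
    (hPhi : Phi t = Phi u) : ∀ k, 1 ≤ k → t k = u k := by
  intro k hk
  by_contra hne
  obtain ⟨k, rfl⟩ : ∃ k', k = k' + 1 := ⟨k - 1, by omega⟩
  have hlt : Phi t < Phi u :=
    ht.summable.tsum_lt_tsum (i := k) (fun k => by gcongr; exact h _ k.succ_pos)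
      (by gcongr; exact_mod_cast (h _ hk).lt_of_ne hne) hu.summable
  exact hlt.ne hPhi

lemma IsCarryPair.Phi_eq (h : IsCarryPair m a b) (hb : IsDigitSeq b) : Phi a = Phi b := by
  obtain ⟨M, rfl⟩ : ∃ M, m = M + 1 := ⟨m - 1, by have := h.one_le; omega⟩
  have ha_tail (k : ℕ) : (a (k + (M + 1) + 1) : ℝ) / 3 ^ (k + (M + 1) + 1) = 0 := by
    simp [h.left_tail _ (by omega : M + 1 < k + (M + 1) + 1)]
  have hb_tail (k : ℕ) : (b (k + (M + 1) + 1) : ℝ) / 3 ^ (k + (M + 1) + 1) =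
      2 / 3 ^ (k + (M + 1) + 1) := by
    simp [h.right_tail _ (by omega : M + 1 < k + (M + 1) + 1)]
  have ha : Summable fun k : ℕ => (a (k + 1) : ℝ) / 3 ^ (k + 1) :=
    (summable_nat_add_iff (M + 1)).1 (by simp only [ha_tail]; exact summable_zero)
  have hhead : ∑ k ∈ range M, (a (k + 1) : ℝ) / 3 ^ (k + 1) =
      ∑ k ∈ range M, (b (k + 1) : ℝ) / 3 ^ (k + 1) :=
    sum_congr rfl fun k hk => by rw [h.eq_of_lt _ k.succ_pos (by simpa using hk)]
  rw [Phi, Phi, ← ha.sum_add_tsum_nat_add (M + 1), ← hb.summable.sum_add_tsum_nat_add (M + 1),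
    sum_range_succ, sum_range_succ, hhead, tsum_congr ha_tail, tsum_congr hb_tail,
    (hasSum_two_div_three_pow (M + 1)).tsum_eq, tsum_zero, h.carry]
  push_cast
  ring

lemma isCarryPair_of_Phi_eq (ha : IsDigitSeq a) (hb : IsDigitSeq b) (hab : Phi a = Phi b)
    (hm : 1 ≤ m) (heq : ∀ k, 1 ≤ k → k < m → a k = b k) (hlt : b m < a m) :
    IsCarryPair m a b := by
  -- `c'`, `c` are the carry pair at `m` built from `b`: `b ≤ c` and `c' ≤ a` digitwise while
  -- `Phi c' = Phi c`, so all four values of `Phi` agree and both digitwise bounds are equalities.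
  set c : ℕ → ℕ := fun k => if k ≤ m then b k else 2
  set c' : ℕ → ℕ := fun k => if k < m then b k else if k = m then b m + 1 else 0
  have hc : IsDigitSeq c := fun k => by
    simp only [c]; split_ifs
    exacts [hb k, le_rfl]
  have hc' : IsDigitSeq c' := fun k => by
    simp only [c']; split_ifs
    exacts [hb k, by have := ha m; omega, by omega]
  have hcarry : IsCarryPair m c' c :=
    ⟨hm, fun k _ hk => by simp [c, c', hk, hk.le], by simp [c, c'],
      fun k hk => by simp [c', hk.ne', hk.not_gt], fun k hk => by simp [c, hk.not_ge]⟩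
  have hbc : ∀ k, 1 ≤ k → b k ≤ c k := fun k _ => by
    simp only [c]; split_ifs
    exacts [le_rfl, hb k]
  have hc'a : ∀ k, 1 ≤ k → c' k ≤ a k := fun k hk => by
    simp only [c']; split_ifs with hkm hkm'
    exacts [(heq k hk hkm).ge, hkm' ▸ hlt, Nat.zero_le _]
  have hle₁ := Phi_le_Phi hb hc hbc
  have hle₂ := Phi_le_Phi hc' ha hc'a
  have hc_eq := hcarry.Phi_eq hc
  have hb_eq_c := eq_of_Phi_eq_of_le hb hc hbc (by linarith)
  have hc'_eq_a := eq_of_Phi_eq_of_le hc' ha hc'a (by linarith)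
  refine ⟨hm, heq, ?_, fun k hk => ?_, fun k hk => ?_⟩
  · simp [← hc'_eq_a m hm, c']
  · simp [← hc'_eq_a k (by omega), c', hk.ne', hk.not_gt]
  · simp [hb_eq_c k (by omega), c, hk.not_ge]

lemma eq_or_isCarryPair_of_Phi_eq (ha : IsDigitSeq a) (hb : IsDigitSeq b) (hab : Phi a = Phi b) :
    (∀ k, 1 ≤ k → a k = b k) ∨ ∃ m, IsCarryPair m a b ∨ IsCarryPair m b a := by
  classical
  by_cases hall : ∀ k, 1 ≤ k → a k = b k
  · exact .inl hall
  push Not at hall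
  obtain ⟨hm, hne⟩ := Nat.find_spec hall
  have heq : ∀ k, 1 ≤ k → k < Nat.find hall → a k = b k := fun k hk hkm => by
    by_contra hk'
    exact Nat.find_min hall hkm ⟨hk, hk'⟩
  refine .inr ⟨Nat.find hall, ?_⟩
  rcases hne.lt_or_gt with hlt | hlt
  · exact .inr (isCarryPair_of_Phi_eq hb ha hab.symm hm (fun k h₁ h₂ => (heq k h₁ h₂).symm) hlt)
  · exact .inl (isCarryPair_of_Phi_eq ha hb hab hm heq hlt)

@[simp] lemma xiPerm_apply (x : ℝ) : xiPerm x = 2 - x := rfl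

lemma xiPerm_mul_self : xiPerm * xiPerm = 1 := by
  ext x
  simp

lemma xiPerm_inv : xiPerm⁻¹ = xiPerm := inv_eq_of_mul_eq_one_right xiPerm_mul_self

lemma xiPerm_zpow_apply (σ : ℤ) (x : ℝ) : (xiPerm ^ σ) x = 1 + (-1) ^ σ * (x - 1) := by
  induction σ using Int.induction_on generalizing x with
  | zero => simp
  | succ k ih =>
    rw [zpow_add_one, Equiv.Perm.mul_apply, ih, zpow_add_one₀ (by norm_num), xiPerm_apply]
    ring
  | pred k ih =>
    rw [zpow_sub_one, Equiv.Perm.mul_apply, ih, zpow_sub_one₀ (by norm_num), xiPerm_inv,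
      xiPerm_apply]
    ring

lemma xiPerm_zpow_congr {σ τ : ℤ} (h : (σ : ZMod 2) = τ) : xiPerm ^ σ = xiPerm ^ τ := by
  have hsq : xiPerm ^ 2 = 1 := (sq xiPerm).trans xiPerm_mul_self
  rw [zpow_eq_zpow_emod' σ hsq, zpow_eq_zpow_emod' τ hsq, (ZMod.intCast_eq_intCast_iff' σ τ 2).1 h]

lemma abs_xiPerm_zpow_apply_le (σ : ℤ) {x : ℝ} (hx₀ : 0 ≤ x) (hx₂ : x ≤ 2) :
    |(xiPerm ^ σ) x| ≤ 2 := by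
  rw [xiPerm_zpow_apply]
  calc |1 + (-1) ^ σ * (x - 1)| ≤ |1| + |(-1) ^ σ * (x - 1)| := abs_add_le _ _
    _ = 1 + |x - 1| := by rw [abs_one, abs_mul, abs_neg_one_zpow, one_mul]
    _ ≤ 2 := by linarith [abs_sub_le_iff.2 (⟨by linarith, by linarith⟩ : x - 1 ≤ 1 ∧ 1 - x ≤ 1)]

lemma S_succ (n i j : ℕ) (t : ℕ → ℕ) :
    S n i (j + 1) t = S n i j t + ∑ k ∈ Ioc (i + j * n) (i + (j + 1) * n), (t k : ℤ) -
      t (i + (j + 1) * n) := by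
  have hsplit := sum_Ioc_consecutive (fun k => (t k : ℤ)) (Nat.zero_le (i + j * n))
    (by nlinarith : i + j * n ≤ i + (j + 1) * n)
  simp only [S, ← Finset.Icc_add_one_left_eq_Ioc, zero_add] at hsplit ⊢
  rw [sum_range_succ, ← hsplit]
  ring

lemma intCast_S_eq_of_le {j₀ j : ℕ} (hn : 1 ≤ n) (ht : ∀ k, i + j₀ * n < k → (t k : ZMod 2) = 0)
    (hj : j₀ ≤ j) : (S n i j t : ZMod 2) = S n i j₀ t := by
  induction j, hj using Nat.le_induction with
  | base => rfl
  | succ j hj ih =>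
    have hmono : j₀ * n ≤ j * n := Nat.mul_le_mul_right n hj
    rw [S_succ, add_one_mul]
    push_cast
    rw [ih, sum_eq_zero fun k hk => ht k (by rw [mem_Ioc] at hk; omega), ht _ (by omega)]
    ring

lemma IsCarryPair.intCast_eq (h : IsCarryPair m a b) {k : ℕ} (hk : 1 ≤ k) :
    (a k : ZMod 2) = b k + if k = m then 1 else 0 := by
  rcases lt_trichotomy k m with hlt | rfl | hgt
  · simp [h.eq_of_lt k hk hlt, hlt.ne]
  · simp [h.carry]
  · simp [h.left_tail k hgt, h.right_tail k hgt, hgt.ne']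
    rfl

lemma IsCarryPair.intCast_S (h : IsCarryPair m a b) (n : ℕ) (hi : 1 ≤ i) (j : ℕ) :
    (S n i j a : ZMod 2) = S n i j b + (if m ≤ i + j * n then 1 else 0) -
      ∑ s ∈ range (j + 1), if i + s * n = m then 1 else 0 := by
  simp only [S, Int.cast_sub, Int.cast_sum, Int.cast_natCast]
  rw [sum_congr rfl fun k hk => h.intCast_eq (mem_Icc.1 hk).1,
    sum_congr rfl fun s _ => h.intCast_eq (by omega : 1 ≤ i + s * n), sum_add_distrib,
    sum_add_distrib, sum_ite_eq']
  simp only [mem_Icc, h.one_le, true_and]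
  ring

noncomputable def xcoordTerm (n i : ℕ) (t : ℕ → ℕ) (j : ℕ) : ℝ :=
  (xiPerm ^ S n i j t) (t (i + j * n)) / 3 ^ (j + 1)

lemma xcoord_eq_tsum (n i : ℕ) (t : ℕ → ℕ) : xcoord n i t = ∑' j, xcoordTerm n i t j := rfl

lemma IsDigitSeq.summable_xcoordTerm (ht : IsDigitSeq t) : Summable (xcoordTerm n i t) :=
  .of_norm_bounded (hasSum_two_div_three_pow 0).summable fun j => by
    rw [xcoordTerm, Real.norm_eq_abs, abs_div, abs_of_pos (by positivity : (0 : ℝ) < 3 ^ (j + 1)),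
      add_zero]
    gcongr
    exact abs_xiPerm_zpow_apply_le _ (Nat.cast_nonneg _) (by exact_mod_cast ht (i + j * n))

lemma xcoord_congr (hi : 1 ≤ i) (h : ∀ k, 1 ≤ k → a k = b k) : xcoord n i a = xcoord n i b := by
  have hS (j : ℕ) : S n i j a = S n i j b := by
    unfold S
    congr 1
    · exact sum_congr rfl fun k hk => by rw [h k (mem_Icc.1 hk).1]
    · exact sum_congr rfl fun s _ => by rw [h (i + s * n) (by omega)]
  exact tsum_congr fun j => by rw [hS j, h (i + j * n) (by omega)]

lemma IsCarryPair.comp (h : IsCarryPair m a b) {f : ℕ → ℕ} (hf : StrictMonoOn f (Set.Ici 1))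
    (hf₁ : 1 ≤ f 1) {s : ℕ} (hs : 1 ≤ s) (hfs : f s = m) : IsCarryPair s (a ∘ f) (b ∘ f) where
  one_le := hs
  eq_of_lt k hk hks :=
    h.eq_of_lt _ (hf₁.trans (hf.monotoneOn (Set.mem_Ici.2 le_rfl) hk hk)) (hfs ▸ hf hk hs hks)
  carry := by simp [hfs, h.carry]
  left_tail k hk := h.left_tail _ (hfs ▸ hf hs (hs.trans hk.le) hk)
  right_tail k hk := h.right_tail _ (hfs ▸ hf hs (hs.trans hk.le) hk)

lemma IsCarryPair.xcoord_eq_of_forall_ne (h : IsCarryPair m a b) (hi : 1 ≤ i)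
    (hm : ∀ s, i + s * n ≠ m) : xcoord n i a = xcoord n i b := by
  refine tsum_congr fun j => ?_
  have hS := h.intCast_S n hi j
  rw [sum_eq_zero fun s _ => if_neg (hm s), sub_zero] at hS
  rcases (hm j).lt_or_gt with hlt | hgt
  · rw [if_neg hlt.not_ge, add_zero] at hS
    rw [xiPerm_zpow_congr hS, h.eq_of_lt _ (by omega) hlt]
  · rw [if_pos hgt.le] at hS
    rw [xiPerm_zpow_congr (τ := S n i j b + 1) (by push_cast; exact hS), zpow_add_one,
      h.left_tail _ hgt, h.right_tail _ hgt]
    norm_num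

lemma IsCarryPair.xcoord_eq_of_eq_add_mul (h : IsCarryPair m a b) (ha : IsDigitSeq a)
    (hb : IsDigitSeq b) (hn : 1 ≤ n) (hi : 1 ≤ i) {s : ℕ} (hs : i + s * n = m) :
    xcoord n i a = xcoord n i b := by
  have hS (j : ℕ) : xiPerm ^ S n i j a = xiPerm ^ S n i j b := by
    refine xiPerm_zpow_congr ?_
    rw [h.intCast_S n hi j, ← hs]
    simp [Nat.mul_left_inj (by omega : n ≠ 0), Nat.mul_le_mul_right_iff (by omega : 0 < n)]
  have hσ (j : ℕ) (hj : s ≤ j) : xiPerm ^ S n i j b = xiPerm ^ S n i s b :=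
    xiPerm_zpow_congr (intCast_S_eq_of_le hn (fun k hk => by
      rw [h.right_tail k (by omega)]; rfl) hj)
  set f : ℕ → ℕ := fun k => i + (k - 1) * n
  have hf : StrictMonoOn f (Set.Ici 1) := fun x hx y hy hxy => by
    have := Nat.mul_lt_mul_of_pos_right
      (by rw [Set.mem_Ici] at hx hy; omega : x - 1 < y - 1) hn
    simp only [f]
    omega
  have hcarry : IsCarryPair (s + 1) (a ∘ f) (b ∘ f) :=
    h.comp hf (by simp [f]; omega) (by omega) (by simp [f, hs])
  have hterm (j : ℕ) : xcoordTerm n i a j - xcoordTerm n i b j =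
      (-1) ^ S n i s b *
        (((a ∘ f) (j + 1) : ℝ) / 3 ^ (j + 1) - ((b ∘ f) (j + 1) : ℝ) / 3 ^ (j + 1)) := by
    simp only [xcoordTerm, hS, Function.comp, f, Nat.add_sub_cancel]
    rcases lt_or_ge j s with hj | hj
    · have := Nat.mul_lt_mul_of_pos_right hj hn
      rw [h.eq_of_lt _ (by omega) (by omega)]
      ring
    · rw [hσ j hj, xiPerm_zpow_apply, xiPerm_zpow_apply]
      ring
  have hPhi : Phi (a ∘ f) - Phi (b ∘ f) = 0 := sub_eq_zero.2 (hcarry.Phi_eq fun k => hb _)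
  rw [← sub_eq_zero, xcoord_eq_tsum, xcoord_eq_tsum,
    ← ha.summable_xcoordTerm.tsum_sub hb.summable_xcoordTerm, tsum_congr hterm, tsum_mul_left,
    (IsDigitSeq.summable (t := a ∘ f) fun k => ha (f k)).tsum_sub
      (IsDigitSeq.summable (t := b ∘ f) fun k => hb (f k))]
  exact mul_eq_zero_of_right _ hPhi

lemma IsCarryPair.xcoord_eq (h : IsCarryPair m a b) (ha : IsDigitSeq a) (hb : IsDigitSeq b)
    (hn : 1 ≤ n) (hi : 1 ≤ i) : xcoord n i a = xcoord n i b := by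
  by_cases hm : ∃ s, i + s * n = m
  · obtain ⟨s, hs⟩ := hm
    exact h.xcoord_eq_of_eq_add_mul ha hb hn hi hs
  · exact h.xcoord_eq_of_forall_ne hi fun s hs => hm ⟨s, hs⟩

end

theorem xcoord_well_defined_general (n : ℕ) (hn : 2 ≤ n) (t : ℝ)
    (a b : ℕ → ℕ) (ha : IsDigitSeq a) (hb : IsDigitSeq b)
    (hA : Phi a = t) (hB : Phi b = t) :
    ∀ i, 1 ≤ i → i ≤ n → xcoord n i a = xcoord n i b := by
  intro i hi _
  rcases eq_or_isCarryPair_of_Phi_eq ha hb (hA.trans hB.symm) with hab | ⟨m, hab | hba⟩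
  · exact xcoord_congr hi hab
  · exact hab.xcoord_eq ha hb (by omega) hi
  · exact (hba.xcoord_eq hb ha (by omega) hi).symm

/-- the functions `x_i` are well defined on `[0,1]`: any two ternary
representations of the same `t ∈ [0,1]` give the same value. -/
theorem xcoord_well_defined (n : ℕ) (hn : 2 ≤ n) (t : ℝ) (ht : t ∈ Set.Icc (0 : ℝ) 1)
    (a b : ℕ → ℕ) (ha : IsDigitSeq a) (hb : IsDigitSeq b)
    (hA : Phi a = t) (hB : Phi b = t) :
    ∀ i, 1 ≤ i → i ≤ n → xcoord n i a = xcoord n i b :=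
  xcoord_well_defined_general n hn t a b ha hb hA hB
end

section
/- Suppose 𝐭 and 𝐮 are two ternary representations of the same t ∈ [0,1] that differ first at position i₀ + j₀n, with t_{i₀+j₀n} = u_{i₀+j₀n} + 1, t_{s} = 0 and u_{s} = 2 for all s > i₀+j₀n. Then for every i > i₀ and j ≥ j₀, the integers S_{i+jn}(𝐭) and S_{i+jn}(𝐮) have opposite parities. -/
open scoped BigOperators ENNReal

/-! Only the parity of `S n i j a - S n i j b` matters, and both sums in it are sums of the
digit differences `a k - b k`. These are even except at the first disagreement `m`, where the
difference is `1`: before `m` the digits agree and after it they are `0` and `2`. The first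
sum contains position `m` and is odd; the second runs over `i + s n`, which never hits
`m = i₀ + j₀ n` because `1 ≤ i₀ < i ≤ n` puts `i` and `i₀` in different residue classes
mod `n`. -/

theorem Finset.odd_sum_of_odd_of_even_of_ne {ι R : Type*} [DecidableEq ι] [Semiring R]
    {s : Finset ι} {f : ι → R} {m : ι} (hm : m ∈ s) (hodd : Odd (f m))
    (heven : ∀ k ∈ s, k ≠ m → Even (f k)) : Odd (∑ k ∈ s, f k) := by
  rw [← Finset.add_sum_erase s f hm]
  refine hodd.add_even (Finset.even_sum _ fun k hk => ?_)
  rw [Finset.mem_erase] at hk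
  exact heven k hk.2 hk.1

theorem Int.even_iff_not_even_of_odd_sub {x y : ℤ} (h : Odd (x - y)) : Even x ↔ ¬Even y :=
  (Int.odd_sub'.mp h).symm.trans Int.not_even_iff_odd.symm

theorem Nat.add_mul_ne_add_mul_of_lt_of_le {n i i₀ s j : ℕ} (hi₀ : 1 ≤ i₀) (hi : i₀ < i)
    (hin : i ≤ n) : i + s * n ≠ i₀ + j * n := by
  intro h
  rcases lt_trichotomy s j with hsj | rfl | hjs
  · have : (s + 1) * n ≤ j * n := Nat.mul_le_mul_right n hsj
    linarith
  · omega
  · have : (j + 1) * n ≤ s * n := Nat.mul_le_mul_right n hjs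
    linarith

theorem S_sub_S (n i j : ℕ) (a b : ℕ → ℕ) :
    S n i j a - S n i j b =
      (∑ k ∈ Finset.Icc 1 (i + j * n), ((a k : ℤ) - b k)) -
        ∑ s ∈ Finset.range (j + 1), ((a (i + s * n) : ℤ) - b (i + s * n)) := by
  simp only [S, Finset.sum_sub_distrib]
  ring

theorem even_digit_sub_of_ne {a b : ℕ → ℕ} {m : ℕ} (hpre : ∀ k, 1 ≤ k → k < m → a k = b k)
    (hza : ∀ s, m < s → a s = 0) (hzb : ∀ s, m < s → b s = 2) (k : ℕ) (hk : 1 ≤ k)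
    (hkm : k ≠ m) : Even ((a k : ℤ) - b k) := by
  rcases hkm.lt_or_gt with hlt | hgt
  · simp [hpre k hk hlt]
  · rw [hza k hgt, hzb k hgt]
    decide

theorem S_opposite_parity_general (n : ℕ) (i0 j0 : ℕ) (hi0 : 1 ≤ i0)
    (a b : ℕ → ℕ)
    (hpre : ∀ k, 1 ≤ k → k < i0 + j0 * n → a k = b k)
    (hdig : a (i0 + j0 * n) = b (i0 + j0 * n) + 1)
    (hza : ∀ s, i0 + j0 * n < s → a s = 0)
    (hzb : ∀ s, i0 + j0 * n < s → b s = 2) :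
    ∀ i j, i0 < i → i ≤ n → j0 ≤ j → (Even (S n i j a) ↔ ¬ Even (S n i j b)) := by
  intro i j hi hin hj
  have hdiff := even_digit_sub_of_ne hpre hza hzb
  have hm : i0 + j0 * n ∈ Finset.Icc 1 (i + j * n) := by
    have : j0 * n ≤ j * n := Nat.mul_le_mul_right n hj
    rw [Finset.mem_Icc]
    omega
  refine Int.even_iff_not_even_of_odd_sub ?_
  rw [S_sub_S]
  refine Odd.sub_even ?_ ?_
  · refine Finset.odd_sum_of_odd_of_even_of_ne hm ⟨0, by simp [hdig]⟩ fun k hk hkm => ?_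
    exact hdiff k (Finset.mem_Icc.mp hk).1 hkm
  · refine Finset.even_sum _ fun s _ => hdiff _ (by omega) ?_
    exact Nat.add_mul_ne_add_mul_of_lt_of_le hi0 hi hin

/-- if two ternary representations of the same `t` first differ at position
`i₀ + j₀n` (with digit one larger in the sequence ending in zeros), then for `i > i₀`
and `j ≥ j₀` the integers `S_{i+jn}(𝐭)` and `S_{i+jn}(𝐮)` have opposite parities. -/
theorem S_opposite_parity (n : ℕ) (hn : 2 ≤ n) (i0 j0 : ℕ) (hi0 : 1 ≤ i0) (hi0n : i0 ≤ n)
    (a b : ℕ → ℕ) (ha : IsDigitSeq a) (hb : IsDigitSeq b) (hPhi : Phi a = Phi b)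
    (hpre : ∀ k, 1 ≤ k → k < i0 + j0 * n → a k = b k)
    (hdig : a (i0 + j0 * n) = b (i0 + j0 * n) + 1)
    (hza : ∀ s, i0 + j0 * n < s → a s = 0)
    (hzb : ∀ s, i0 + j0 * n < s → b s = 2) :
    ∀ i j, i0 < i → i ≤ n → j0 ≤ j → (Even (S n i j a) ↔ ¬ Even (S n i j b)) :=
  S_opposite_parity_general n i0 j0 hi0 a b hpre hdig hza hzb
end

section
/- The n-dimensional Peano curve α : [0,1] → [0,1]^n, α(t) = (x_1(t), …, x_n(t)), is surjective: for every point (a_1, …, a_n) ∈ [0,1]^n there exists t ∈ [0,1] with x_i(t) = a_i for all i = 1,…,n. -/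
open scoped BigOperators ENNReal

/-!
The `i`-th coordinate of `α(t)` reads the ternary digits of `t` in the column of positions
`i, i + n, i + 2n, …`, each flipped by `ξ` according to the parity of `S`, which counts the
digits before it in the other columns. As `ξ` preserves parity, that parity can be computed from
the target digits themselves, so prescribed expansions of `a_1, …, a_n` are realised by an
explicit digit sequence `t`, and `Φ(t)` is the required parameter.

The canonical expansion of `Φ(t)` differs from `t` only when `t` ends in `2`s, and then by a
carry `…x222… ↦ …(x+1)000…`. A carry changes no coordinate: in the column of the carried digit
the coordinate's digits undergo a carry or, after `ξ`, a reversed carry, and in every other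
column each flip `2 ↦ 0` is undone by the change of parity of `S` caused by the carried digit.
-/

open Finset Fin.NatCast

/-- `t'` arises from `t = …x b b b…` (digits in base `b + 1`, all `b` after position `m`) by
carrying into position `m`: `t' = …(x+1) 0 0 0…`. -/
structure IsCarry (b m : ℕ) (t t' : ℕ → ℕ) : Prop where
  eq_of_lt : ∀ k < m, t' k = t k
  eq_succ : t' m = t m + 1
  eq_top : ∀ k > m, t k = b
  eq_zero : ∀ k > m, t' k = 0

theorem IsCarry.comp {b m : ℕ} {t t' f : ℕ → ℕ} (h : IsCarry b (f m) t t') (hf : StrictMono f) :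
    IsCarry b m (t ∘ f) (t' ∘ f) :=
  ⟨fun _ hk ↦ h.eq_of_lt _ (hf hk), h.eq_succ, fun _ hk ↦ h.eq_top _ (hf hk),
    fun _ hk ↦ h.eq_zero _ (hf hk)⟩

namespace Real

variable {b : ℕ}

theorem ofDigits_const_zero : ofDigits (fun _ ↦ (0 : Fin (b + 1))) = 0 := by
  simp [ofDigits, ofDigitsTerm]

theorem ofDigits_eq_of_isCarry {m : ℕ} {d e : ℕ → Fin (b + 1)}
    (h : IsCarry b m (fun k ↦ d k) (fun k ↦ e k)) : ofDigits e = ofDigits d := by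
  have : NeZero b := ⟨by have := (e m).isLt; have := h.eq_succ; omega⟩
  have htop : (fun k ↦ d (k + (m + 1))) = fun _ ↦ Fin.last b :=
    funext fun k ↦ Fin.ext (h.eq_top _ (by omega))
  have hzero : (fun k ↦ e (k + (m + 1))) = fun _ ↦ 0 :=
    funext fun k ↦ Fin.ext (h.eq_zero _ (by omega))
  have hprefix : ∑ k ∈ range m, ofDigitsTerm e k = ∑ k ∈ range m, ofDigitsTerm d k :=
    sum_congr rfl fun k hk ↦ by
      simp only [ofDigitsTerm, h.eq_of_lt k (mem_range.mp hk)]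
  rw [ofDigits_eq_sum_add_ofDigits e (m + 1), ofDigits_eq_sum_add_ofDigits d (m + 1),
    sum_range_succ, sum_range_succ, hprefix, htop, hzero, ofDigits_const_zero,
    ofDigits_const_last_eq_one]
  simp only [ofDigitsTerm, h.eq_succ]
  push_cast
  ring

theorem ofDigits_lt_one {d : ℕ → Fin (b + 1)} {k : ℕ} (hk : d k ≠ Fin.last b) :
    ofDigits d < 1 := by
  have : NeZero b := ⟨fun hb ↦ by subst hb; exact hk (Subsingleton.elim (α := Fin 1) _ _)⟩
  rw [← ofDigits_const_last_eq_one b]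
  refine Summable.tsum_lt_tsum (i := k) (fun i ↦ ?_) ?_ summable_ofDigitsTerm
    summable_ofDigitsTerm
  · simp only [ofDigitsTerm]
    gcongr
    exact Fin.le_last _
  · simp only [ofDigitsTerm]
    gcongr
    exact lt_of_le_of_ne (Fin.le_last _) (Fin.val_ne_of_ne hk)

theorem ofDigits_mul_base (d : ℕ → Fin (b + 1)) :
    ofDigits d * (b + 1) = d 0 + ofDigits (fun k ↦ d (k + 1)) := by
  rw [ofDigits_eq_sum_add_ofDigits d 1]
  simp only [range_one, sum_singleton, ofDigitsTerm]
  push_cast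
  field_simp

theorem exists_ofDigits_mul_pow (d : ℕ → Fin (b + 1)) (n : ℕ) :
    ∃ N : ℕ, ofDigits d * (b + 1) ^ n = N + ofDigits (fun k ↦ d (k + n)) := by
  induction n with
  | zero => exact ⟨0, by simp⟩
  | succ n ih =>
    obtain ⟨N, hN⟩ := ih
    refine ⟨N * (b + 1) + d n, ?_⟩
    have := ofDigits_mul_base (fun k ↦ d (k + n))
    simp only [zero_add, add_assoc, add_comm 1 n] at this
    rw [pow_succ, ← mul_assoc, hN, add_mul, this]
    push_cast
    ring

theorem digits_ofDigits {d : ℕ → Fin (b + 1)} (hd : ∀ n, ∃ k ≥ n, d k ≠ Fin.last b) :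
    digits (ofDigits d) (b + 1) = d := by
  funext n
  obtain ⟨N, hN⟩ := exists_ofDigits_mul_pow d n
  obtain ⟨k, hkn, hk⟩ := hd (n + 1)
  have htail := ofDigits_mul_base (fun k ↦ d (k + n))
  set y := ofDigits (fun k ↦ d (k + (n + 1)))
  have hy : y ∈ Set.Ico 0 1 := ⟨ofDigits_nonneg _,
    ofDigits_lt_one (k := k - (n + 1)) (by rwa [Nat.sub_add_cancel hkn])⟩
  have hfloor : ⌊ofDigits d * ((b + 1 : ℕ) : ℝ) ^ (n + 1)⌋₊ = N * (b + 1) + d n := by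
    rw [Nat.floor_eq_iff (by have := ofDigits_nonneg d; positivity)]
    simp only [zero_add, add_assoc, add_comm 1 n] at htail
    push_cast
    rw [pow_succ, ← mul_assoc, hN, add_mul, htail]
    constructor <;> linarith [hy.1, hy.2]
  ext
  rw [digits, hfloor, Fin.val_ofNat, add_comm, Nat.add_mul_mod_self_right,
    Nat.mod_eq_of_lt (d n).isLt]

end Real

/-- `ξ^e` on the digits `D = Fin 3`; it only depends on the parity `e` of the exponent. -/
def xiPow (e : ZMod 2) (a : Fin 3) : Fin 3 := if e = 0 then a else a.rev

@[simp] theorem xiPow_zero (a : Fin 3) : xiPow 0 a = a := rfl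

@[simp] theorem xiPow_one (a : Fin 3) : xiPow 1 a = a.rev := rfl

theorem xiPow_xiPow (e : ZMod 2) (a : Fin 3) : xiPow e (xiPow e a) = a := by
  revert e a; decide

theorem xiPow_add_one_zero (e : ZMod 2) : xiPow (e + 1) 0 = xiPow e 2 := by
  revert e; decide

theorem natCast_val_xiPow (e : ZMod 2) (a : Fin 3) :
    ((xiPow e a : ℕ) : ZMod 2) = ((a : ℕ) : ZMod 2) := by
  revert e a; decide

theorem xiPerm_zpow_natCast (z : ℤ) {a : ℕ} (ha : a ≤ 2) :
    (xiPerm ^ z) (a : ℝ) = ((xiPow z a : ℕ) : ℝ) := by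
  have hsq : xiPerm ^ (2 : ℤ) = 1 := by
    ext x
    simp [sq, Equiv.Perm.mul_apply, xiPerm]
  rcases Int.even_or_odd z with ⟨k, rfl⟩ | ⟨k, rfl⟩
  · rw [ZMod.intCast_eq_zero_iff_even.mpr (Even.add_self k), ← two_mul, zpow_mul, hsq,
      one_zpow]
    interval_cases a <;> rfl
  · rw [ZMod.intCast_eq_one_iff_odd.mpr (odd_two_mul_add_one k), zpow_add_one, zpow_mul, hsq,
      one_zpow, one_mul]
    interval_cases a <;> norm_num [xiPerm]

theorem IsDigitSeq.val_natCast {t : ℕ → ℕ} (ht : IsDigitSeq t) (k : ℕ) :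
    ((t k : Fin 3) : ℕ) = t k :=
  Nat.mod_eq_of_lt (Nat.lt_succ_of_le (ht k))

theorem isDigitSeq_ternaryDigit (x : ℝ) : IsDigitSeq (ternaryDigit x) := fun k ↦ by
  unfold ternaryDigit
  split <;> omega

theorem ternaryDigit_succ {x : ℝ} (hx : x ∈ Set.Ico 0 1) (k : ℕ) :
    ternaryDigit x (k + 1) = Real.digits x 3 k := by
  rw [ternaryDigit, if_neg hx.2.ne, Int.floor_toNat, Real.digits, Fin.val_ofNat]
  norm_cast

theorem Phi_eq_ofDigits {t : ℕ → ℕ} {d : ℕ → Fin 3} (h : ∀ k, (d k : ℕ) = t (k + 1)) :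
    Phi t = Real.ofDigits d := by
  unfold Phi Real.ofDigits Real.ofDigitsTerm
  congr 1
  funext k
  rw [h, div_eq_mul_inv]
  norm_cast

theorem Phi_mem_Icc {t : ℕ → ℕ} (ht : IsDigitSeq t) : Phi t ∈ Set.Icc 0 1 := by
  rw [Phi_eq_ofDigits (fun k ↦ ht.val_natCast (k + 1))]
  exact ⟨Real.ofDigits_nonneg _, Real.ofDigits_le_one _⟩

theorem Phi_eq_one {t : ℕ → ℕ} (ht : ∀ k ≥ 1, t k = 2) : Phi t = 1 := by
  rw [Phi_eq_ofDigits (d := fun _ ↦ Fin.last 2) (fun k ↦ (ht (k + 1) (by omega)).symm)]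
  exact Real.ofDigits_const_last_eq_one 2

theorem ternaryDigit_Phi {t : ℕ → ℕ} (ht : IsDigitSeq t) (hfreq : ∀ N, ∃ k ≥ N, t k ≠ 2)
    {k : ℕ} (hk : 1 ≤ k) : ternaryDigit (Phi t) k = t k := by
  set d : ℕ → Fin 3 := fun k ↦ (t (k + 1) : Fin 3)
  have hd : ∀ N, ∃ k ≥ N, d k ≠ Fin.last 2 := fun N ↦ by
    obtain ⟨k, hkN, hk⟩ := hfreq (N + 1)
    refine ⟨k - 1, by omega, fun hlast ↦ hk ?_⟩
    have := congrArg Fin.val hlast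
    rwa [ht.val_natCast, Nat.sub_add_cancel (by omega)] at this
  rw [Phi_eq_ofDigits (fun k ↦ ht.val_natCast (k + 1))]
  obtain ⟨_, -, hdN⟩ := hd 0
  obtain ⟨k, rfl⟩ := Nat.exists_eq_add_of_le' hk
  rw [ternaryDigit_succ ⟨Real.ofDigits_nonneg d, Real.ofDigits_lt_one hdN⟩,
    Real.digits_ofDigits hd, ht.val_natCast]

theorem Phi_eq_of_isCarry {t t' : ℕ → ℕ} {m : ℕ} (ht : IsDigitSeq t) (ht' : IsDigitSeq t')
    (h : IsCarry 2 m t t') (hm : 1 ≤ m) : Phi t' = Phi t := by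
  rw [Phi_eq_ofDigits (fun k ↦ ht.val_natCast (k + 1)),
    Phi_eq_ofDigits (fun k ↦ ht'.val_natCast (k + 1))]
  obtain ⟨m, rfl⟩ := Nat.exists_eq_add_of_le' hm
  refine Real.ofDigits_eq_of_isCarry (m := m) ?_
  simpa only [ht.val_natCast, ht'.val_natCast, Function.comp_def] using
    h.comp (f := (· + 1)) fun _ _ ↦ Nat.succ_lt_succ

def offColumn (n p : ℕ) : Finset ℕ := (Ico 1 p).filter (fun k ↦ k % n ≠ p % n)

theorem mem_offColumn {n p k : ℕ} : k ∈ offColumn n p ↔ 1 ≤ k ∧ k < p ∧ k % n ≠ p % n := by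
  simp [offColumn, and_assoc]

theorem exists_eq_add_mul_of_mod_eq {n i j k : ℕ} (hi : 1 ≤ i) (hin : i ≤ n) (hk : 1 ≤ k)
    (hkp : k ≤ i + j * n) (hmod : k % n = (i + j * n) % n) : ∃ s ≤ j, k = i + s * n := by
  rw [Nat.add_mul_mod_self_right] at hmod
  have hik : i ≤ k := by
    by_contra! hki
    rcases hin.lt_or_eq with hin | rfl
    · rw [Nat.mod_eq_of_lt (by omega), Nat.mod_eq_of_lt hin] at hmod
      omega
    · rw [Nat.mod_self, Nat.mod_eq_of_lt hki] at hmod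
      omega
  obtain ⟨s, hs⟩ := (Nat.modEq_iff_dvd' hik).mp hmod.symm
  have hsj : n * s ≤ n * j := by rw [mul_comm n j]; omega
  exact ⟨s, Nat.le_of_mul_le_mul_left hsj (by omega), by rw [mul_comm]; omega⟩

theorem S_eq_sum_offColumn {n i : ℕ} (hi : 1 ≤ i) (hin : i ≤ n) (j : ℕ) (t : ℕ → ℕ) :
    S n i j t = ∑ k ∈ offColumn n (i + j * n), (t k : ℤ) := by
  have hcolumn : (Icc 1 (i + j * n)).filter (fun k ↦ k % n = (i + j * n) % n) =
      (range (j + 1)).image (fun s ↦ i + s * n) := by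
    ext k
    simp only [mem_filter, mem_Icc, mem_image, mem_range, Nat.lt_succ_iff]
    constructor
    · rintro ⟨⟨hk, hkp⟩, hmod⟩
      obtain ⟨s, hs, rfl⟩ := exists_eq_add_mul_of_mod_eq hi hin hk hkp hmod
      exact ⟨s, hs, rfl⟩
    · rintro ⟨s, hs, rfl⟩
      refine ⟨⟨by omega, by nlinarith⟩, by simp [Nat.add_mul_mod_self_right]⟩
  have hoff : (Icc 1 (i + j * n)).filter (fun k ↦ k % n ≠ (i + j * n) % n) =
      offColumn n (i + j * n) := by
    ext k
    rw [mem_filter, mem_Icc, mem_offColumn]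
    constructor
    · rintro ⟨⟨hk, hkp⟩, hmod⟩
      exact ⟨hk, lt_of_le_of_ne hkp (by rintro rfl; exact hmod rfl), hmod⟩
    · rintro ⟨hk, hkp, hmod⟩
      exact ⟨⟨hk, hkp.le⟩, hmod⟩
  have hinj : Set.InjOn (fun s ↦ i + s * n) (range (j + 1)) := fun s _ s' _ h ↦
    Nat.eq_of_mul_eq_mul_right (by omega) (Nat.add_left_cancel h)
  rw [S, ← sum_filter_add_sum_filter_not _ (fun k ↦ k % n = (i + j * n) % n), hcolumn,
    sum_image hinj, hoff]
  ring

theorem sum_offColumn_eq_of_le {M : Type*} [AddCommMonoid M] {n m p : ℕ} {f : ℕ → M}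
    (hmp : m ≤ p) (hmod : p % n = m % n) (hf : ∀ k > m, f k = 0) :
    ∑ k ∈ offColumn n p, f k = ∑ k ∈ offColumn n m, f k := by
  refine (sum_subset (fun k hk ↦ ?_) fun k hk hkm ↦ hf k ?_).symm
  · rw [mem_offColumn] at hk ⊢
    exact ⟨hk.1, by omega, hmod ▸ hk.2.2⟩
  · rw [mem_offColumn] at hk hkm
    have : k ≠ m := by rintro rfl; exact hk.2.2 hmod.symm
    omega

/-- `ξ^{S_{i+jn}}(t_{i+jn})`, the `j`-th digit of `x_i(t)`, as a function of the position
`p = i + jn` (see `S_eq_sum_offColumn`). -/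
def peanoDigit (n : ℕ) (t : ℕ → ℕ) (p : ℕ) : Fin 3 :=
  xiPow (∑ k ∈ offColumn n p, (t k : ZMod 2)) (t p)

theorem peanoDigit_congr {n p : ℕ} {t t' : ℕ → ℕ} (hp : 1 ≤ p)
    (h : ∀ k, 1 ≤ k → k ≤ p → t k = t' k) : peanoDigit n t p = peanoDigit n t' p := by
  unfold peanoDigit
  congr 1
  · exact sum_congr rfl fun k hk ↦ by
      rw [mem_offColumn] at hk
      rw [h k hk.1 hk.2.1.le]
  · rw [h p hp le_rfl]

theorem xcoord_eq_ofDigits {n i : ℕ} {t : ℕ → ℕ} (ht : IsDigitSeq t) (hi : 1 ≤ i)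
    (hin : i ≤ n) : xcoord n i t = Real.ofDigits (fun j ↦ peanoDigit n t (i + j * n)) := by
  unfold xcoord Real.ofDigits Real.ofDigitsTerm peanoDigit
  congr 1
  funext j
  rw [xiPerm_zpow_natCast _ (ht _), S_eq_sum_offColumn hi hin, div_eq_mul_inv]
  push_cast
  rfl

theorem xcoord_congr_s9 {n i : ℕ} {t t' : ℕ → ℕ} (ht : IsDigitSeq t) (ht' : IsDigitSeq t')
    (h : ∀ k ≥ 1, t k = t' k) (hi : 1 ≤ i) (hin : i ≤ n) : xcoord n i t = xcoord n i t' := by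
  rw [xcoord_eq_ofDigits ht hi hin, xcoord_eq_ofDigits ht' hi hin]
  congr 1
  funext j
  exact peanoDigit_congr (by omega) fun k hk _ ↦ h k hk

/-- The digit sequence `t` with `peanoDigit n t = c`: as `ξ` preserves parity, the exponents
for `t` can be computed from `c` itself, so no recursion is needed. -/
def peanoDigitInv (n : ℕ) (c : ℕ → Fin 3) (p : ℕ) : ℕ :=
  xiPow (∑ k ∈ offColumn n p, ((c k : ℕ) : ZMod 2)) (c p)

theorem isDigitSeq_peanoDigitInv (n : ℕ) (c : ℕ → Fin 3) : IsDigitSeq (peanoDigitInv n c) :=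
  fun _ ↦ Nat.le_of_lt_succ (Fin.isLt _)

theorem peanoDigit_peanoDigitInv (n : ℕ) (c : ℕ → Fin 3) (p : ℕ) :
    peanoDigit n (peanoDigitInv n c) p = c p := by
  simp only [peanoDigit, peanoDigitInv, natCast_val_xiPow, Fin.cast_val_eq_self, xiPow_xiPow]

theorem IsCarry.natCast_zmod_two {m : ℕ} {t t' : ℕ → ℕ} (h : IsCarry 2 m t t') (k : ℕ) :
    (t' k : ZMod 2) = t k + if k = m then 1 else 0 := by
  rcases lt_trichotomy k m with hk | rfl | hk
  · simp [h.eq_of_lt k hk, hk.ne]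
  · simp [h.eq_succ]
  · simp only [h.eq_top k hk, h.eq_zero k hk, hk.ne', if_false]
    rfl

theorem IsCarry.sum_offColumn {m : ℕ} {t t' : ℕ → ℕ} (h : IsCarry 2 m t t') (n p : ℕ) :
    ∑ k ∈ offColumn n p, (t' k : ZMod 2) =
      ∑ k ∈ offColumn n p, (t k : ZMod 2) + if m ∈ offColumn n p then 1 else 0 := by
  simp only [h.natCast_zmod_two, sum_add_distrib, sum_ite_eq']

theorem peanoDigit_eq_of_isCarry {n m p : ℕ} {t t' : ℕ → ℕ} (h : IsCarry 2 m t t')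
    (hm : 1 ≤ m) (hp : 1 ≤ p) (hpm : p % n ≠ m % n) : peanoDigit n t' p = peanoDigit n t p := by
  rcases lt_trichotomy p m with hlt | rfl | hgt
  · exact peanoDigit_congr hp fun k _ hk ↦ h.eq_of_lt k (by omega)
  · exact absurd rfl hpm
  · unfold peanoDigit
    rw [h.sum_offColumn, if_pos (mem_offColumn.mpr ⟨hm, hgt, hpm.symm⟩), h.eq_top p hgt,
      h.eq_zero p hgt]
    exact xiPow_add_one_zero _

/-- `ξ^e` turns a carry into a carry (`e = 0`) or into a reversed carry (`e = 1`). -/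
theorem ofDigits_xiPow_eq_of_isCarry {m : ℕ} {v v' : ℕ → Fin 3} {E : ℕ → ZMod 2}
    (h : IsCarry 2 m (fun k ↦ v k) (fun k ↦ v' k)) (hE : ∀ k > m, E k = E m) :
    Real.ofDigits (fun k ↦ xiPow (E k) (v' k)) = Real.ofDigits (fun k ↦ xiPow (E k) (v k)) := by
  have hlt : ∀ k < m, v' k = v k := fun k hk ↦ Fin.ext (h.eq_of_lt k hk)
  have hm := h.eq_succ
  have htop : ∀ k > m, (v k : ℕ) = 2 := h.eq_top
  have hzero : ∀ k > m, (v' k : ℕ) = 0 := h.eq_zero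
  rcases (by decide : ∀ e : ZMod 2, e = 0 ∨ e = 1) (E m) with he | he
  · refine Real.ofDigits_eq_of_isCarry (m := m) ⟨fun k hk ↦ by simp [hlt k hk], ?_,
      fun k hk ↦ ?_, fun k hk ↦ ?_⟩ <;> simp_all
  · refine (Real.ofDigits_eq_of_isCarry (m := m) ⟨fun k hk ↦ by simp [hlt k hk], ?_,
      fun k hk ↦ ?_, fun k hk ↦ ?_⟩).symm
    · simp only [he, xiPow_one, Fin.val_rev]
      have := (v' m).isLt
      omega
    · simp only [hE k hk, he, xiPow_one, Fin.val_rev, hzero k hk]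
    · simp only [hE k hk, he, xiPow_one, Fin.val_rev, htop k hk]

theorem xcoord_eq_of_isCarry {n i m : ℕ} {t t' : ℕ → ℕ} (ht : IsDigitSeq t)
    (ht' : IsDigitSeq t') (h : IsCarry 2 m t t') (hm : 1 ≤ m) (hi : 1 ≤ i) (hin : i ≤ n) :
    xcoord n i t' = xcoord n i t := by
  rw [xcoord_eq_ofDigits ht' hi hin, xcoord_eq_ofDigits ht hi hin]
  by_cases hcol : i % n = m % n
  · obtain ⟨jm, -, rfl⟩ := exists_eq_add_mul_of_mod_eq (j := m) hi hin hm (by nlinarith)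
      (by rw [Nat.add_mul_mod_self_right, hcol])
    have hmono : StrictMono (fun j ↦ i + j * n) := fun a b hab ↦ by
      have := Nat.mul_lt_mul_of_pos_right hab (by omega : 0 < n)
      simp only
      omega
    have hsum : ∀ j, ∑ k ∈ offColumn n (i + j * n), (t' k : ZMod 2) =
        ∑ k ∈ offColumn n (i + j * n), (t k : ZMod 2) := fun j ↦ by
      rw [h.sum_offColumn, if_neg (by simp [mem_offColumn, Nat.add_mul_mod_self_right]),
        add_zero]
    simp only [peanoDigit, hsum]
    refine ofDigits_xiPow_eq_of_isCarry (m := jm) ?_ fun j hj ↦ ?_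
    · simpa only [ht.val_natCast, ht'.val_natCast, Function.comp_def] using
        h.comp (f := fun j ↦ i + j * n) (m := jm) hmono
    · refine sum_offColumn_eq_of_le (hmono hj).le (by simp [Nat.add_mul_mod_self_right])
        fun k hk ↦ ?_
      rw [h.eq_top k hk]
      rfl
  · congr 1
    funext j
    exact peanoDigit_eq_of_isCarry h hm (by omega) (by rwa [Nat.add_mul_mod_self_right])

theorem frequently_ne_or_eq_or_exists_last_ne {α : Type*} (t : ℕ → α) (a : α) :
    (∀ N, ∃ k ≥ N, t k ≠ a) ∨ (∀ k ≥ 1, t k = a) ∨ ∃ m ≥ 1, t m ≠ a ∧ ∀ k > m, t k = a := by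
  classical
  by_contra! ⟨⟨N, hN⟩, ⟨k, hk, hka⟩, hlast⟩
  have hkN : k ≤ N := by
    by_contra! hNk
    exact hka (hN k hNk.le)
  set m := Nat.findGreatest (fun k ↦ t k ≠ a) N
  have hkm : k ≤ m := Nat.le_findGreatest hkN hka
  have hm : t m ≠ a := Nat.findGreatest_spec (P := fun k ↦ t k ≠ a) hkN hka
  obtain ⟨l, hlm, hla⟩ := hlast m (hk.trans hkm) hm
  rcases le_or_gt l N with hlN | hlN
  · exact Nat.findGreatest_is_greatest hlm hlN hla
  · exact hla (hN l hlN.le)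

theorem exists_isCarry {t : ℕ → ℕ} {m : ℕ} (ht : IsDigitSeq t) (hm : t m ≠ 2)
    (htail : ∀ k > m, t k = 2) :
    ∃ t', IsDigitSeq t' ∧ IsCarry 2 m t t' ∧ ∀ N, ∃ k ≥ N, t' k ≠ 2 := by
  refine ⟨fun k ↦ if k < m then t k else if k = m then t m + 1 else 0, fun k ↦ ?_,
    ⟨fun k hk ↦ if_pos hk, by simp, htail, fun k hk ↦ ?_⟩, fun N ↦ ⟨max N m + 1, by omega, ?_⟩⟩
  · have := ht k
    have := ht m
    dsimp only
    split_ifs <;> omega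
  · simp [hk.not_gt, hk.ne']
  · simp [show ¬max N m + 1 < m by omega, show max N m + 1 ≠ m by omega]

theorem xcoord_ternaryDigit_Phi {n i : ℕ} {t : ℕ → ℕ} (ht : IsDigitSeq t) (hi : 1 ≤ i)
    (hin : i ≤ n) : xcoord n i (ternaryDigit (Phi t)) = xcoord n i t := by
  have hd := isDigitSeq_ternaryDigit (Phi t)
  rcases frequently_ne_or_eq_or_exists_last_ne t 2 with hfreq | hall | ⟨m, hm, htm, htail⟩
  · exact xcoord_congr_s9 hd ht (fun k hk ↦ ternaryDigit_Phi ht hfreq hk) hi hin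
  · refine xcoord_congr_s9 hd ht (fun k hk ↦ ?_) hi hin
    rw [Phi_eq_one hall, ternaryDigit, if_pos rfl, hall k hk]
  · obtain ⟨t', ht', hcarry, hfreq⟩ := exists_isCarry ht htm htail
    rw [← Phi_eq_of_isCarry ht ht' hcarry hm, ← xcoord_eq_of_isCarry ht ht' hcarry hm hi hin]
    exact xcoord_congr_s9 (isDigitSeq_ternaryDigit _) ht' (fun k hk ↦ ternaryDigit_Phi ht' hfreq hk)
      hi hin

/-- the `n`-dimensional Peano curve is surjective onto `[0,1]^n`. -/
theorem peano_curve_surjective (n : ℕ) (hn : 2 ≤ n) (a : Fin n → ℝ)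
    (ha : ∀ i, a i ∈ Set.Icc (0 : ℝ) 1) :
    ∃ t ∈ Set.Icc (0 : ℝ) 1, ∀ i : Fin n, peanoCoord n (i.val + 1) t = a i := by
  choose d _ hd using fun i ↦ Real.ofDigits_SurjOn (b := 3) (by norm_num) (ha i)
  set t := peanoDigitInv n fun p ↦ d ⟨(p - 1) % n, Nat.mod_lt _ (by omega)⟩ ((p - 1) / n)
  have ht : IsDigitSeq t := isDigitSeq_peanoDigitInv _ _
  refine ⟨Phi t, Phi_mem_Icc ht, fun i ↦ ?_⟩
  rw [peanoCoord, xcoord_ternaryDigit_Phi ht (by omega) i.isLt,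
    xcoord_eq_ofDigits ht (by omega) i.isLt, ← hd i]
  congr 1
  funext j
  have hij : i.val + 1 + j * n - 1 = i.val + j * n := by omega
  rw [peanoDigit_peanoDigitInv, hij]
  congr 1
  · ext
    simp [Nat.mod_eq_of_lt i.isLt]
  · rw [Nat.add_mul_div_right _ _ (by omega), Nat.div_eq_of_lt i.isLt, zero_add]
end
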